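/- arXiv:2211.11411 — 2 statements merged into one kernel-verified Lean document; each statement's English description precedes it below -/
import Mathlib

section
/- Let Γ be a countable discrete group and (f_n) a sequence of nonnegative functions in ℓ²(Γ), and suppose the sequences (s_n^{(i)}) ⊆ Γ, i = 1,…,k, satisfy: (a) f_n = ∑_{i=1}^k δ_{s_n^{(i)}} * α_i + w_n with α_i ∈ ℓ²(Γ) nonnegative and ‖w_n‖₂ → 0, and (b) for i ≠ j, (s_n^{(i)})⁻¹ s_n^{(j)} leaves every finite subset of Γ as n → ∞. Then for every s ∈ Γ, Φ(f_n)(s) → ∑_{i=1}^k Φ(α_i)(s) as n → ∞. -/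
/-!
Work in `ℓ²(Γ, ℝ)`, where `Φ(f)(t) = ⟪f, ρ_t f⟫`. Since `f_n` differs from
`g_n = ∑ᵢ λ(s_n^{(i)}) αᵢ` by `w_n → 0` while `‖g_n‖ ≤ ∑ᵢ ‖αᵢ‖`, it suffices to treat `g_n`.
Because `λ` and `ρ` commute, `⟪λ(a) x, ρ_t λ(b) y⟫ = ⟪x, λ(a⁻¹b) ρ_t y⟫`: the diagonal terms of
`⟪g_n, ρ_t g_n⟫` are the `Φ(αᵢ)(t)`, and the cross terms are matrix coefficients of the left
regular representation at group elements tending to infinity. These vanish in the limit: for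
finitely supported vectors because an `ℓ²` function tends to `0` at infinity, and in general
because the coefficients are uniformly Lipschitz.
-/

open Filter Topology
open scoped lp ENNReal InnerProductSpace

lemma Filter.tendsto_cofinite_of_forall_finset {α β : Type*} {l : Filter α} {u : α → β}
    (h : ∀ F : Finset β, ∀ᶠ n in l, u n ∉ F) : Tendsto u l cofinite :=
  hasBasis_cofinite.tendsto_right_iff.2 fun s hs => by simpa using h hs.toFinset

lemma memℓp_two_of_summable_sq {ι : Type*} {f : ι → ℝ} (hf : Summable fun x => f x ^ 2) :
    Memℓp f 2 :=
  memℓp_gen (by simpa using hf)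

namespace lp

variable {ι κ 𝕜 : Type*} [RCLike 𝕜]

lemma memℓp_two_comp (e : ι ≃ κ) (f : ℓ²(κ, 𝕜)) : Memℓp (f ∘ e) 2 := by
  have hp : 0 < (2 : ℝ≥0∞).toReal := by norm_num
  rw [memℓp_gen_iff hp]
  exact e.summable_iff.2 ((lp.memℓp f).summable hp)

noncomputable def compEquiv (e : ι ≃ κ) : ℓ²(κ, 𝕜) ≃ₗᵢ[𝕜] ℓ²(ι, 𝕜) where
  toFun f := ⟨f ∘ e, memℓp_two_comp e f⟩
  invFun f := ⟨f ∘ e.symm, memℓp_two_comp e.symm f⟩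
  map_add' _ _ := rfl
  map_smul' _ _ := rfl
  left_inv f := by ext; simp
  right_inv f := by ext; simp
  norm_map' f := by
    have hp : 0 < (2 : ℝ≥0∞).toReal := by norm_num
    simp only [LinearEquiv.coe_mk, lp.norm_eq_tsum_rpow hp]
    exact congrArg (· ^ _) (e.tsum_eq fun i => ‖f i‖ ^ (2 : ℝ≥0∞).toReal)

lemma tendsto_norm_cofinite_zero {E : ι → Type*} [∀ i, NormedAddCommGroup (E i)] {p : ℝ≥0∞}
    (hp : 0 < p.toReal) (f : lp E p) : Tendsto (fun i => ‖f i‖) cofinite (𝓝 0) := by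
  have h := ((Real.continuous_rpow_const (inv_nonneg.2 hp.le)).tendsto 0).comp
    ((lp.memℓp f).summable hp).tendsto_cofinite_zero
  rw [Real.zero_rpow (inv_ne_zero hp.ne')] at h
  refine h.congr fun i => ?_
  simp [Function.comp, ← Real.rpow_mul (norm_nonneg _), mul_inv_cancel₀ hp.ne']

lemma real_inner_eq_tsum (f g : ℓ²(ι, ℝ)) : ⟪f, g⟫_ℝ = ∑' x, f x * g x := by
  rw [lp.inner_eq_tsum]
  exact tsum_congr fun x => Real.inner_apply _ _

lemma norm_eq_sqrt_tsum_sq (f : ℓ²(ι, ℝ)) : ‖f‖ = √(∑' x, f x ^ 2) := by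
  have h := lp.norm_rpow_eq_tsum (p := 2) (by norm_num) f
  simp only [ENNReal.toReal_ofNat, Real.rpow_two, Real.norm_eq_abs, sq_abs] at h
  rw [← h, Real.sqrt_sq (norm_nonneg f)]

end lp

section InnerProductSpace

variable {𝕜 E : Type*} [RCLike 𝕜] [NormedAddCommGroup E] [InnerProductSpace 𝕜 E]

lemma norm_inner_map_self_sub_le (T : E →L[𝕜] E) (x y : E) :
    ‖⟪x, T x⟫_𝕜 - ⟪y, T y⟫_𝕜‖ ≤ ‖T‖ * ‖x - y‖ * (‖x‖ + ‖y‖) := by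
  have hsplit : ⟪x, T x⟫_𝕜 - ⟪y, T y⟫_𝕜 = ⟪x - y, T x⟫_𝕜 + ⟪y, T (x - y)⟫_𝕜 := by
    simp only [inner_sub_left, inner_sub_right, map_sub]; ring
  rw [hsplit]
  refine (norm_add_le _ _).trans ?_
  have h₁ := (norm_inner_le_norm (𝕜 := 𝕜) (x - y) (T x)).trans
    (mul_le_mul_of_nonneg_left (T.le_opNorm x) (norm_nonneg _))
  have h₂ := (norm_inner_le_norm (𝕜 := 𝕜) y (T (x - y))).trans
    (mul_le_mul_of_nonneg_left (T.le_opNorm (x - y)) (norm_nonneg _))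
  nlinarith

theorem tendsto_inner_map_self_sub {ι : Type*} {l : Filter ι} (T : E →L[𝕜] E) {x y : ι → E}
    {C : ℝ} (hy : ∀ n, ‖y n‖ ≤ C) (hxy : Tendsto (fun n => x n - y n) l (𝓝 0)) :
    Tendsto (fun n => ⟪x n, T (x n)⟫_𝕜 - ⟪y n, T (y n)⟫_𝕜) l (𝓝 0) := by
  have hd := tendsto_norm_zero.comp hxy
  have hbound : Tendsto (fun n => ‖T‖ * ‖x n - y n‖ * (‖x n - y n‖ + 2 * C)) l (𝓝 0) := by
    simpa using (hd.const_mul ‖T‖).mul (hd.add_const (2 * C))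
  refine squeeze_zero_norm (fun n => (norm_inner_map_self_sub_le T (x n) (y n)).trans ?_) hbound
  have hx : ‖x n‖ ≤ ‖x n - y n‖ + C := (norm_le_norm_sub_add _ _).trans (by linarith [hy n])
  exact mul_le_mul_of_nonneg_left (by linarith [hy n]) (by positivity)

end InnerProductSpace

section RegularRepresentation

variable {Γ 𝕜 : Type*} [Group Γ] [RCLike 𝕜]

noncomputable def leftReg (g : Γ) : ℓ²(Γ, 𝕜) ≃ₗᵢ[𝕜] ℓ²(Γ, 𝕜) :=
  lp.compEquiv (Equiv.mulLeft g⁻¹)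

noncomputable def rightReg (t : Γ) : ℓ²(Γ, 𝕜) ≃ₗᵢ[𝕜] ℓ²(Γ, 𝕜) :=
  lp.compEquiv (Equiv.mulRight t)

@[simp]
lemma leftReg_apply (g : Γ) (a : ℓ²(Γ, 𝕜)) (x : Γ) : leftReg g a x = a (g⁻¹ * x) := rfl

@[simp]
lemma rightReg_apply (t : Γ) (a : ℓ²(Γ, 𝕜)) (x : Γ) : rightReg t a x = a (x * t) := rfl

@[simp]
lemma leftReg_one (a : ℓ²(Γ, 𝕜)) : leftReg 1 a = a := by
  ext; simp

lemma inner_leftReg_rightReg_leftReg (g h t : Γ) (a b : ℓ²(Γ, 𝕜)) :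
    ⟪leftReg g a, rightReg t (leftReg h b)⟫_𝕜 = ⟪a, leftReg (g⁻¹ * h) (rightReg t b)⟫_𝕜 := by
  conv_rhs => rw [← (leftReg g).inner_map_map]
  congr 1
  ext x
  simp [mul_assoc]

lemma leftReg_single [DecidableEq Γ] (g y : Γ) (c : 𝕜) :
    leftReg g (lp.single 2 y c) = lp.single 2 (g * y) c := by
  ext x
  simp [lp.single_apply, Pi.single_apply, inv_mul_eq_iff_eq_mul]

theorem tendsto_inner_leftReg_zero {ι : Type*} {l : Filter ι} {u : ι → Γ}
    (hu : Tendsto u l cofinite) (a b : ℓ²(Γ, 𝕜)) :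
    Tendsto (fun n => ⟪a, leftReg (u n) b⟫_𝕜) l (𝓝 0) := by
  classical
  let S : Set ℓ²(Γ, 𝕜) := {b | Tendsto (fun n => ⟪a, leftReg (u n) b⟫_𝕜) l (𝓝 0)}
  have hlip : ∀ n, LipschitzWith ‖a‖₊ fun b : ℓ²(Γ, 𝕜) => ⟪a, leftReg (u n) b⟫_𝕜 := by
    refine fun n => LipschitzWith.of_dist_le_mul fun b b' => ?_
    rw [dist_eq_norm, dist_eq_norm, ← inner_sub_right, ← map_sub, coe_nnnorm]
    exact (norm_inner_le_norm _ _).trans_eq (by rw [LinearIsometryEquiv.norm_map])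
  have hS : IsClosed S :=
    (LipschitzWith.uniformEquicontinuous _ _ hlip).equicontinuous.isClosed_setOfPred_tendsto
      continuous_const
  have hsingle : ∀ y c, lp.single 2 y c ∈ S := by
    intro y c
    have hy : Tendsto (fun n => u n * y) l cofinite :=
      (mul_left_injective y).tendsto_cofinite.comp hu
    have ha := tendsto_zero_iff_norm_tendsto_zero.2
      ((lp.tendsto_norm_cofinite_zero (by norm_num) a).comp hy)
    simpa [S, leftReg_single, lp.inner_single_right] using ha.star.const_mul c
  refine hS.mem_of_tendsto (lp.hasSum_single ENNReal.ofNat_ne_top b)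
    (Eventually.of_forall fun F => ?_)
  simpa [S, map_sum, inner_sum] using tendsto_finsetSum F fun y _ => hsingle y (b y)

theorem tendsto_inner_sum_leftReg {ι κ : Type*} [Fintype κ] {l : Filter ι} (a : κ → ℓ²(Γ, 𝕜))
    (s : ι → κ → Γ) (hs : Pairwise fun i j => Tendsto (fun n => (s n i)⁻¹ * s n j) l cofinite)
    (t : Γ) :
    Tendsto (fun n => ⟪∑ i, leftReg (s n i) (a i), rightReg t (∑ j, leftReg (s n j) (a j))⟫_𝕜)
      l (𝓝 (∑ i, ⟪a i, rightReg t (a i)⟫_𝕜)) := by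
  classical
  simp only [map_sum, inner_sum, sum_inner, inner_leftReg_rightReg_leftReg]
  have hlim : ∀ i j, Tendsto (fun n => ⟪a i, leftReg ((s n i)⁻¹ * s n j) (rightReg t (a j))⟫_𝕜)
      l (𝓝 (if i = j then ⟪a i, rightReg t (a i)⟫_𝕜 else 0)) := by
    intro i j
    by_cases hij : i = j
    · subst hij
      simpa using tendsto_const_nhds
    · simpa [hij] using tendsto_inner_leftReg_zero (hs hij) (a i) (rightReg t (a j))
  convert tendsto_finsetSum Finset.univ fun j _ =>
    tendsto_finsetSum Finset.univ fun i _ => hlim i j using 2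
  simp only [Finset.sum_ite_eq', Finset.mem_univ, if_true]

end RegularRepresentation

theorem Phi_tendsto_sum_of_decomposition_general {Γ : Type*} [Group Γ] (k : ℕ)
    (f : ℕ → Γ → ℝ) (α : Fin k → Γ → ℝ) (w : ℕ → Γ → ℝ) (s : ℕ → Fin k → Γ)
    (hα : ∀ i, Summable fun x => α i x ^ 2)
    (hw : ∀ n, Summable fun x => w n x ^ 2)
    (hdecomp : ∀ n x, f n x = (∑ i : Fin k, α i ((s n i)⁻¹ * x)) + w n x)
    (hwto0 : Tendsto (fun n => ∑' x, w n x ^ 2) atTop (nhds 0))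
    (hsep : ∀ i j : Fin k, i ≠ j → ∀ F : Finset Γ,
      ∀ᶠ n in atTop, (s n i)⁻¹ * s n j ∉ F) :
    ∀ t : Γ, Tendsto (fun n => ∑' x, f n x * f n (x * t)) atTop
      (nhds (∑ i : Fin k, ∑' x, α i x * α i (x * t))) := by
  intro t
  let A i : ℓ²(Γ, ℝ) := ⟨α i, memℓp_two_of_summable_sq (hα i)⟩
  let W n : ℓ²(Γ, ℝ) := ⟨w n, memℓp_two_of_summable_sq (hw n)⟩
  let G n := ∑ i, leftReg (s n i) (A i)
  have hGW : ∀ n x, (G n + W n) x = f n x := by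
    intro n x
    rw [hdecomp, lp.coeFn_add, Pi.add_apply, lp.coeFn_sum, Finset.sum_apply]
    rfl
  have hf : ∀ n, ∑' x, f n x * f n (x * t) = ⟪G n + W n, rightReg t (G n + W n)⟫_ℝ := by
    intro n
    simp only [lp.real_inner_eq_tsum, rightReg_apply, hGW]
  have hG : ∀ n, ‖G n‖ ≤ ∑ i, ‖A i‖ := fun n =>
    (norm_sum_le _ _).trans_eq (by simp only [LinearIsometryEquiv.norm_map])
  have hW : Tendsto W atTop (𝓝 0) := by
    rw [tendsto_zero_iff_norm_tendsto_zero]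
    simpa [W, lp.norm_eq_sqrt_tsum_sq, Function.comp_def] using
      (Real.continuous_sqrt.tendsto 0).comp hwto0
  have hmain := tendsto_inner_sum_leftReg A s
    (fun i j hij => tendsto_cofinite_of_forall_finset (hsep i j hij)) t
  have hpert := tendsto_inner_map_self_sub
    ((rightReg (𝕜 := ℝ) t).toContinuousLinearEquiv : ℓ²(Γ, ℝ) →L[ℝ] ℓ²(Γ, ℝ)) hG
    (x := fun n => G n + W n) (by simpa using hW)
  have hA : ∀ i, ⟪A i, rightReg t (A i)⟫_ℝ = ∑' x, α i x * α i (x * t) := fun i =>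
    lp.real_inner_eq_tsum _ _
  have hlim := (hmain.add hpert).congr fun n => (add_sub_cancel _ _).trans (hf n).symm
  simpa only [add_zero, hA] using hlim

/-- If `f_n = ∑_{i=1}^k δ_{s_n^{(i)}} * α_i + w_n` with `‖w_n‖₂ → 0` and the shifts
mutually separate (`(s_n^{(i)})⁻¹ s_n^{(j)}` leaves every finite set for `i ≠ j`), then
`Φ(f_n)(t) → ∑_{i=1}^k Φ(α_i)(t)` for every `t ∈ Γ`. -/
theorem Phi_tendsto_sum_of_decomposition {Γ : Type*} [Group Γ] [Countable Γ] (k : ℕ)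
    (f : ℕ → Γ → ℝ) (α : Fin k → Γ → ℝ) (w : ℕ → Γ → ℝ) (s : ℕ → Fin k → Γ)
    (hfnn : ∀ n x, 0 ≤ f n x) (hαnn : ∀ i x, 0 ≤ α i x)
    (hα : ∀ i, Summable fun x => α i x ^ 2)
    (hw : ∀ n, Summable fun x => w n x ^ 2)
    (hf2 : ∀ n, Summable fun x => f n x ^ 2)
    (hdecomp : ∀ n x, f n x = (∑ i : Fin k, α i ((s n i)⁻¹ * x)) + w n x)
    (hwto0 : Tendsto (fun n => ∑' x, w n x ^ 2) atTop (nhds 0))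
    (hsep : ∀ i j : Fin k, i ≠ j → ∀ F : Finset Γ,
      ∀ᶠ n in atTop, (s n i)⁻¹ * s n j ∉ F) :
    ∀ t : Γ, Tendsto (fun n => ∑' x, f n x * f n (x * t)) atTop
      (nhds (∑ i : Fin k, ∑' x, α i x * α i (x * t))) :=
  Phi_tendsto_sum_of_decomposition_general k f α w s hα hw hdecomp hwto0 hsep
end

section
/- Let Γ be a finitely generated amenable group with right Cayley graph X with respect to a finite symmetric generating set, and let P be a Γ-invariant site percolation on X with no infinite components. Then for every s ∈ Γ, E[ |K(o) \ K(o)s⁻¹| / |K(o)| ; o ∈ ω ] = P[o ∈ ω, s ∉ K(o)], where K(o) is the cluster of the identity o and the expectation uses the convention 0/0 = 0. -/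
/-!
Mass transport: let every open site `a` whose neighbour `a * s` lies outside its cluster `K(a)`
send mass `1 / |K(a)|` to each site of `K(a)`. The identity `o` sends out mass `1` exactly when it
is open and `s ∉ K(o)`; as `K(a) = K(o)` for `a ∈ K(o)`, it receives `|K(o) \ K(o)s⁻¹| / |K(o)|`
(both counts need `K(o)` finite). By translation invariance of `P`, the expected mass sent out and
the expected mass received agree.
-/

open MeasureTheory Filter
open scoped symmDiff

/-- The percolation cluster of `x` in the Cayley graph of `Γ` (w.r.t. generating set `S`)
under the configuration `ω` of open sites. -/
def percolationCluster {Γ : Type*} [Group Γ] (S : Finset Γ) (ω : Γ → Bool) (x : Γ) :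
    Set Γ :=
  {y | ω x = true ∧
    Relation.ReflTransGen (fun a b => ω a = true ∧ ω b = true ∧ a⁻¹ * b ∈ S) x y}

open Set
open scoped ENNReal

section Measurability

variable {α β : Type*} [MeasurableSpace α] {r : α → β → β → Prop}

lemma Measurable.listIsChain (hr : ∀ a b, Measurable fun ω => r ω a b) (l : List β) :
    Measurable fun ω => l.IsChain (r ω) := by
  induction l using List.twoStepInduction with
  | nil => simp
  | singleton => simp
  | cons_cons a b l _ ih => simpa [List.isChain_cons_cons] using (hr a b).and (ih b)

lemma Measurable.reflTransGen [Countable β] (hr : ∀ a b, Measurable fun ω => r ω a b)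
    (x y : β) : Measurable fun ω => Relation.ReflTransGen (r ω) x y := by
  have hchain : ∀ ω, Relation.ReflTransGen (r ω) x y ↔
      ∃ l : List β, (x :: l).IsChain (r ω) ∧ (x :: l).getLast (List.cons_ne_nil x l) = y :=
    fun ω => ⟨List.exists_isChain_cons_of_relationReflTransGen,
      fun ⟨l, hl, hlast⟩ => List.relationReflTransGen_of_exists_isChain_cons l hl hlast⟩
  simp_rw [hchain]
  exact .exists fun l => (Measurable.listIsChain hr _).and measurable_const

lemma Measurable.natCard [Countable β] {T : α → Set β} (hT : Measurable T) :
    Measurable fun ω => Nat.card (T ω) := by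
  simp_rw [Nat.card_coe_set_eq]
  exact measurable_ncard.comp hT

end Measurability

namespace percolationCluster

variable {Γ : Type*} [Group Γ] {S : Finset Γ} {ω : Γ → Bool} {x y : Γ}

lemma open_of_mem (h : y ∈ percolationCluster S ω x) : ω y = true := by
  obtain ⟨hx, hxy⟩ := h
  induction hxy with
  | refl => exact hx
  | tail _ hstep => exact hstep.2.1

lemma self_mem (hx : ω x = true) : x ∈ percolationCluster S ω x := ⟨hx, .refl⟩

lemma symm (hS : ∀ g ∈ S, g⁻¹ ∈ S) (h : y ∈ percolationCluster S ω x) :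
    x ∈ percolationCluster S ω y := by
  have : Std.Symm fun a b : Γ => ω a = true ∧ ω b = true ∧ a⁻¹ * b ∈ S :=
    ⟨fun _ _ ⟨ha, hb, hab⟩ => ⟨hb, ha, by simpa using hS _ hab⟩⟩
  exact ⟨open_of_mem h, Std.Symm.symm _ _ h.2⟩

lemma natCard_pos (hK : (percolationCluster S ω x).Finite) (hx : ω x = true) :
    0 < Nat.card (percolationCluster S ω x) :=
  have := hK.to_subtype
  Nat.card_pos_iff.2 ⟨⟨x, self_mem hx⟩, this⟩

lemma eq_of_mem (hS : ∀ g ∈ S, g⁻¹ ∈ S) (h : y ∈ percolationCluster S ω x) :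
    percolationCluster S ω y = percolationCluster S ω x := by
  ext z
  exact ⟨fun hz => ⟨h.1, h.2.trans hz.2⟩, fun hz => ⟨open_of_mem h, (symm hS h).2.trans hz.2⟩⟩

lemma mul_mem_translate (g : Γ) (h : y ∈ percolationCluster S ω x) :
    g * y ∈ percolationCluster S (fun z => ω (g⁻¹ * z)) (g * x) :=
  ⟨by simpa using h.1,
    h.2.lift (g * ·) fun a b hab => by simpa [Function.onFun, mul_assoc] using hab⟩

lemma translate (g : Γ) (ω : Γ → Bool) (x : Γ) :
    percolationCluster S (fun z => ω (g⁻¹ * z)) (g * x) =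
      (g * ·) '' percolationCluster S ω x := by
  ext y
  refine ⟨fun hy => ⟨g⁻¹ * y, ?_, mul_inv_cancel_left g y⟩, ?_⟩
  · simpa using mul_mem_translate g⁻¹ hy
  · rintro ⟨y, hy, rfl⟩
    exact mul_mem_translate g hy

end percolationCluster

lemma measurable_percolationCluster {Γ : Type*} [Group Γ] [Countable Γ] (S : Finset Γ)
    (x : Γ) : Measurable fun ω => percolationCluster S ω x :=
  measurable_set_iff.2 fun y => ((measurable_pi_apply x).eq_const true).and <|
    Measurable.reflTransGen (r := fun ω a b => ω a = true ∧ ω b = true ∧ a⁻¹ * b ∈ S)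
      (fun a b => by fun_prop) x y

theorem lintegral_tsum_massTransport {Γ α : Type*} [Group Γ] [Countable Γ] [MeasurableSpace α]
    {P : Measure (Γ → α)} (hinv : ∀ g : Γ, Measure.map (fun ω => fun x : Γ => ω (g⁻¹ * x)) P = P)
    {F : (Γ → α) → Γ → Γ → ℝ≥0∞} (hF : ∀ x y, Measurable fun ω => F ω x y)
    (hF_inv : ∀ g ω x y, F (fun z => ω (g⁻¹ * z)) (g * x) (g * y) = F ω x y) :
    ∫⁻ ω, ∑' x, F ω x 1 ∂P = ∫⁻ ω, ∑' x, F ω 1 x ∂P := by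
  have htranslate (x : Γ) : ∫⁻ ω, F ω 1 x ∂P = ∫⁻ ω, F ω x⁻¹ 1 ∂P := by
    calc ∫⁻ ω, F ω 1 x ∂P
        = ∫⁻ ω, F (fun z => ω (x * z)) x⁻¹ 1 ∂P := by
          simpa using lintegral_congr fun ω => (hF_inv x⁻¹ ω 1 x).symm
      _ = ∫⁻ ω, F ω x⁻¹ 1 ∂(Measure.map (fun ω => fun z => ω (x⁻¹⁻¹ * z)) P) := by
          rw [lintegral_map (hF _ _) (measurable_pi_lambda _ fun z => measurable_pi_apply _),
            inv_inv]
      _ = ∫⁻ ω, F ω x⁻¹ 1 ∂P := by rw [hinv]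
  rw [lintegral_tsum fun x => (hF x 1).aemeasurable,
    lintegral_tsum fun x => (hF 1 x).aemeasurable, tsum_congr htranslate]
  exact ((Equiv.inv Γ).tsum_eq fun x => ∫⁻ ω, F ω x 1 ∂P).symm

lemma tsum_indicator_const_of_finite {β : Type*} {D : Set β} (hD : D.Finite) (c : ℝ≥0∞) :
    ∑' x, D.indicator (fun _ => c) x = Nat.card D * c := by
  rw [← tsum_subtype, ENNReal.tsum_set_const, ← hD.cast_ncard_eq, Nat.card_coe_set_eq]
  rfl

section BoundaryTransport

variable {Γ : Type*} [Group Γ] (S : Finset Γ) (s : Γ)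

open Classical in
noncomputable def boundaryTransport (ω : Γ → Bool) (a b : Γ) : ℝ≥0∞ :=
  if b ∈ percolationCluster S ω a ∧ a * s ∉ percolationCluster S ω a then
    (Nat.card (percolationCluster S ω a) : ℝ≥0∞)⁻¹
  else 0

lemma measurable_boundaryTransport [Countable Γ] (a b : Γ) :
    Measurable fun ω => boundaryTransport S s ω a b := by
  have hK := measurable_percolationCluster S a
  refine .ite (measurableSet_setOfPred.2 ?_)
    (measurable_from_top.comp hK.natCard).inv measurable_const
  exact ((measurable_set_mem b).comp hK).and ((measurable_set_notMem _).comp hK)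

lemma boundaryTransport_translate (g : Γ) (ω : Γ → Bool) (a b : Γ) :
    boundaryTransport S s (fun z => ω (g⁻¹ * z)) (g * a) (g * b) =
      boundaryTransport S s ω a b := by
  rw [boundaryTransport, boundaryTransport, percolationCluster.translate, mul_assoc,
    (mul_right_injective g).mem_set_image, (mul_right_injective g).mem_set_image,
    Nat.card_image_of_injective (mul_right_injective g)]

variable {S s}

lemma tsum_boundaryTransport_one_left {ω : Γ → Bool} (hK : (percolationCluster S ω 1).Finite) :
    ∑' b, boundaryTransport S s ω 1 b =
      {ω | ω 1 = true ∧ s ∉ percolationCluster S ω 1}.indicator 1 ω := by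
  by_cases hs : s ∈ percolationCluster S ω 1
  · simp [boundaryTransport, hs]
  by_cases h1 : ω 1 = true
  · have hterm (b : Γ) : boundaryTransport S s ω 1 b = (percolationCluster S ω 1).indicator
        (fun _ => (Nat.card (percolationCluster S ω 1) : ℝ≥0∞)⁻¹) b := by
      by_cases hb : b ∈ percolationCluster S ω 1
      · rw [indicator_of_mem hb]
        exact if_pos ⟨hb, by rwa [one_mul]⟩
      · rw [indicator_of_notMem hb]
        exact if_neg fun h => hb h.1
    rw [tsum_congr hterm, tsum_indicator_const_of_finite hK, ENNReal.mul_inv_cancel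
      (mod_cast (percolationCluster.natCard_pos hK h1).ne') (ENNReal.natCast_ne_top _)]
    simp [h1, hs]
  · have hterm (b : Γ) : boundaryTransport S s ω 1 b = 0 := if_neg fun h => h1 h.1.1
    rw [tsum_congr hterm, tsum_zero, indicator_of_notMem fun h => h1 h.1]

lemma tsum_boundaryTransport_one_right (hS : ∀ g ∈ S, g⁻¹ ∈ S) {ω : Γ → Bool}
    (hK : (percolationCluster S ω 1).Finite) :
    ∑' a, boundaryTransport S s ω a 1 =
      ENNReal.ofReal (if ω 1 = true then
        ((Nat.card ↥(percolationCluster S ω 1 \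
            (fun x => x * s⁻¹) '' percolationCluster S ω 1) : ℝ)
          / (Nat.card ↥(percolationCluster S ω 1) : ℝ))
      else 0) := by
  set K := percolationCluster S ω 1
  by_cases h1 : ω 1 = true
  · have hterm (a : Γ) : boundaryTransport S s ω a 1 =
        (K \ (· * s⁻¹) '' K).indicator (fun _ => (Nat.card K : ℝ≥0∞)⁻¹) a := by
      by_cases ha : a ∈ K
      · classical
        rw [boundaryTransport, percolationCluster.eq_of_mem hS ha, indicator_apply]
        refine if_congr ?_ rfl rfl
        simp [image_mul_right, ha, percolationCluster.self_mem h1, K]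
      · have h1a : 1 ∉ percolationCluster S ω a := fun h => ha (percolationCluster.symm hS h)
        rw [indicator_of_notMem fun h => ha h.1]
        exact if_neg fun h => h1a h.1
    rw [tsum_congr hterm, tsum_indicator_const_of_finite (hK.subset sdiff_subset), if_pos h1,
      ENNReal.ofReal_div_of_pos (mod_cast percolationCluster.natCard_pos hK h1),
      ENNReal.ofReal_natCast, ENNReal.ofReal_natCast, div_eq_mul_inv]
  · have hterm (a : Γ) : boundaryTransport S s ω a 1 = 0 :=
      if_neg fun h => h1 (percolationCluster.open_of_mem h.1)
    rw [tsum_congr hterm, tsum_zero, if_neg h1, ENNReal.ofReal_zero]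

end BoundaryTransport

theorem expected_cluster_boundary_eq_general {Γ : Type*} [Group Γ] [Countable Γ]
    (S : Finset Γ) (hSsymm : ∀ g ∈ S, g⁻¹ ∈ S)
    (P : Measure (Γ → Bool))
    (hinv : ∀ g : Γ, Measure.map (fun ω => fun x : Γ => ω (g⁻¹ * x)) P = P)
    (hfin : ∀ᵐ ω ∂P, ∀ x : Γ, (percolationCluster S ω x).Finite)
    (s : Γ) :
    (∫ ω, (if ω 1 = true then
        ((Nat.card ↥(percolationCluster S ω 1 \
            (fun x => x * s⁻¹) '' percolationCluster S ω 1) : ℝ)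
          / (Nat.card ↥(percolationCluster S ω 1) : ℝ))
      else 0) ∂P)
      = (P {ω | ω 1 = true ∧ s ∉ percolationCluster S ω 1}).toReal := by
  have hmeas (a b : Γ) := measurable_boundaryTransport S s a b
  have hE : MeasurableSet {ω : Γ → Bool | ω 1 = true ∧ s ∉ percolationCluster S ω 1} :=
    measurableSet_setOfPred.2 <| ((measurable_pi_apply 1).eq_const true).and <|
      (measurable_set_notMem s).comp (measurable_percolationCluster S 1)
  have hright : ∀ᵐ ω ∂P, ∑' a, boundaryTransport S s ω a 1 = ENNReal.ofReal _ :=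
    hfin.mono fun ω hω => tsum_boundaryTransport_one_right hSsymm (hω 1)
  have hleft : ∀ᵐ ω ∂P, ∑' b, boundaryTransport S s ω 1 b = _ :=
    hfin.mono fun ω hω => tsum_boundaryTransport_one_left (hω 1)
  rw [integral_eq_lintegral_of_nonneg_ae (.of_forall fun ω => by positivity) ?_,
    ← lintegral_congr_ae hright, lintegral_tsum_massTransport hinv hmeas
      (boundaryTransport_translate S s), lintegral_congr_ae hleft, lintegral_indicator_one hE]
  have hsum : Measurable fun ω => ∑' a, boundaryTransport S s ω a 1 := .tsum fun a => hmeas a 1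
  refine hsum.ennreal_toReal.aestronglyMeasurable.congr ?_
  filter_upwards [hright] with ω h
  rw [h, ENNReal.toReal_ofReal (by positivity)]

/-- For a Γ-invariant site percolation with no infinite components on a Cayley graph of a
finitely generated amenable group (amenability expressed by a right-Følner sequence):
`E[|K(o) \ K(o)s⁻¹| / |K(o)| ; o ∈ ω] = P[o ∈ ω, s ∉ K(o)]` (mass-transport identity). -/
theorem expected_cluster_boundary_eq {Γ : Type*} [Group Γ] [Countable Γ] [DecidableEq Γ]
    (S : Finset Γ) (hSsymm : ∀ g ∈ S, g⁻¹ ∈ S)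
    (hSgen : Subgroup.closure (S : Set Γ) = ⊤)
    (hamen : ∃ Fo : ℕ → Finset Γ, (∀ n, (Fo n).Nonempty) ∧ ∀ g : Γ,
      Tendsto (fun n => (((Fo n ∆ (Fo n).image (fun x => x * g)).card : ℝ) / (Fo n).card))
        atTop (nhds 0))
    (P : Measure (Γ → Bool)) [IsProbabilityMeasure P]
    (hinv : ∀ g : Γ, Measure.map (fun ω => fun x : Γ => ω (g⁻¹ * x)) P = P)
    (hfin : ∀ᵐ ω ∂P, ∀ x : Γ, (percolationCluster S ω x).Finite)
    (s : Γ) :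
    (∫ ω, (if ω 1 = true then
        ((Nat.card ↥(percolationCluster S ω 1 \
            (fun x => x * s⁻¹) '' percolationCluster S ω 1) : ℝ)
          / (Nat.card ↥(percolationCluster S ω 1) : ℝ))
      else 0) ∂P)
      = (P {ω | ω 1 = true ∧ s ∉ percolationCluster S ω 1}).toReal :=
  expected_cluster_boundary_eq_general S hSsymm P hinv hfin s
end
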